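/- For every integer n ≥ 0 and every integer k ≥ 3, the coefficients of the three-Catalan triangle satisfy C(n+1, k) = C(n, k−3) + 2·C(n, k−2) + 3·C(n, k−1) + 4·C(n, k) + 3·C(n, k+1) + 2·C(n, k+2) + C(n, k+3). -/
import Mathlib


/-- The quadrinomial coefficient: the coefficient of `x^k` in `(1 + x + x^2 + x^3)^n`,
extended by `0` for negative `k`. -/
noncomputable def quadrinomial (n : ℕ) (k : ℤ) : ℕ :=
  if 0 ≤ k then
    ((∑ i ∈ Finset.range 4, (Polynomial.X : Polynomial ℕ) ^ i) ^ n).coeff k.toNat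
  else 0

/-- The coefficients of the three-Catalan triangle. -/
noncomputable def threeCatalan (n : ℕ) (k : ℤ) : ℤ :=
  if 0 ≤ k ∧ k ≤ 3 * (n : ℤ) then
    (quadrinomial (2 * n) (3 * (n : ℤ) + k) : ℤ) -
      (quadrinomial (2 * n) (3 * (n : ℤ) + k + 1) : ℤ)
  else 0

open Polynomial

noncomputable def Q : Polynomial ℕ := ∑ i ∈ Finset.range 4, Polynomial.X ^ i

lemma Q_sq : Q ^ 2 = 1 + C 2 * X + C 3 * X ^ 2 + C 4 * X ^ 3 + C 3 * X ^ 4 + C 2 * X ^ 5 + X ^ 6 := by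
  simp [Q, Finset.sum_range_succ]
  ring_nf

lemma coeff_mul_Qsq (p : Polynomial ℕ) (t : ℕ) :
    (p * Q ^ 2).coeff (t + 6) =
      p.coeff (t + 6) + 2 * p.coeff (t + 5) + 3 * p.coeff (t + 4) + 4 * p.coeff (t + 3) +
        3 * p.coeff (t + 2) + 2 * p.coeff (t + 1) + p.coeff t := by
  rw [Q_sq]
  simp only [mul_add, mul_one, coeff_add, mul_left_comm p, coeff_C_mul, coeff_mul_X_pow']
  norm_num
  simp only [show t + 6 - 2 = t + 4 by omega, show t + 6 - 3 = t + 3 by omega,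
    show t + 6 - 4 = t + 2 by omega, show t + 6 - 5 = t + 1 by omega]

lemma Q_natDegree : Q.natDegree ≤ 3 := by
  apply le_trans (Polynomial.natDegree_sum_le _ _)
  simp [Finset.fold_max_le]
  omega

lemma coeff_Q_pow_eq_zero (j t : ℕ) (ht : 3 * j < t) : (Q ^ j).coeff t = 0 := by
  apply coeff_eq_zero_of_natDegree_lt
  calc (Q ^ j).natDegree ≤ j * Q.natDegree := natDegree_pow_le
    _ ≤ j * 3 := Nat.mul_le_mul_left _ Q_natDegree
    _ < t := by omega

lemma tc_eq (n m : ℕ) :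
    threeCatalan n m =
      ((Q ^ (2 * n)).coeff (3 * n + m) : ℤ) - ((Q ^ (2 * n)).coeff (3 * n + m + 1) : ℤ) := by
  rw [threeCatalan, quadrinomial, quadrinomial]
  by_cases h : (m : ℤ) ≤ 3 * (n : ℤ)
  · rw [if_pos ⟨Int.natCast_nonneg m, h⟩, if_pos (by positivity), if_pos (by positivity)]
    have h1 : (3 * (n : ℤ) + m).toNat = 3 * n + m := by omega
    have h2 : (3 * (n : ℤ) + m + 1).toNat = 3 * n + m + 1 := by omega
    rw [h1, h2, Q]
  · rw [if_neg (by tauto)]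
    rw [coeff_Q_pow_eq_zero _ _ (by omega), coeff_Q_pow_eq_zero _ _ (by omega)]
    simp

theorem threeCatalan_rec (n : ℕ) (k : ℤ) (hk : 3 ≤ k) :
    threeCatalan (n + 1) k =
      threeCatalan n (k - 3) + 2 * threeCatalan n (k - 2) + 3 * threeCatalan n (k - 1) +
        4 * threeCatalan n k + 3 * threeCatalan n (k + 1) + 2 * threeCatalan n (k + 2) +
        threeCatalan n (k + 3) := by
  lift k to ℕ using by omega with m
  obtain ⟨r, rfl⟩ : ∃ r, m = r + 3 := ⟨m - 3, by omega⟩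
  have e0 : ((r + 3 : ℕ) : ℤ) - 3 = ((r : ℕ) : ℤ) := by push_cast; ring
  have e1 : ((r + 3 : ℕ) : ℤ) - 2 = ((r + 1 : ℕ) : ℤ) := by push_cast; ring
  have e2 : ((r + 3 : ℕ) : ℤ) - 1 = ((r + 2 : ℕ) : ℤ) := by push_cast; ring
  have e4 : ((r + 3 : ℕ) : ℤ) + 1 = ((r + 4 : ℕ) : ℤ) := by push_cast; ring
  have e5 : ((r + 3 : ℕ) : ℤ) + 2 = ((r + 5 : ℕ) : ℤ) := by push_cast; ring
  have e6 : ((r + 3 : ℕ) : ℤ) + 3 = ((r + 6 : ℕ) : ℤ) := by push_cast; ring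
  rw [e0, e1, e2, e4, e5, e6, tc_eq, tc_eq, tc_eq, tc_eq, tc_eq, tc_eq, tc_eq, tc_eq]
  have hp : Q ^ (2 * (n + 1)) = Q ^ (2 * n) * Q ^ 2 := by
    rw [← pow_add]; ring_nf
  have i1 : 3 * (n + 1) + (r + 3) = (3 * n + r) + 6 := by omega
  have i2 : 3 * n + r + 6 + 1 = (3 * n + r + 1) + 6 := by omega
  rw [hp, i1, i2, coeff_mul_Qsq, coeff_mul_Qsq]
  push_cast
  ring_nf
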